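/- arXiv:1307.1901 — 2 statements merged into one kernel-verified Lean document; each statement's English description precedes it below -/
import Mathlib

section
/- Let n, k ≥ 0. For a partition μ with μ₁ ≤ k and i_{2n}(μ) < ∞, define the integer sequence s(μ) of length n+k by s(μ)_i = (n+k+1−i) − μ†_{k+1−i} for 1 ≤ i ≤ k and s(μ)_{k+j} = (n+1−j) + τ_{2n}(μ)_j for 1 ≤ j ≤ n. Then μ ↦ s(μ) is a bijection from the set of partitions μ with μ₁ ≤ k and i_{2n}(μ) < ∞ onto the set of integer sequences s of length n+k such that the absolute values |s_1|, …, |s_{n+k}| are a permutation of 1, …, n+k, s_1 > s_2 > ⋯ > s_k, and s_{k+1} > s_{k+2} > ⋯ > s_{n+k} > 0. -/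
/-- A partition: a weakly decreasing sequence of nonnegative integers, indexed starting at 1
(`f 0 = 0` by convention), with finitely many nonzero terms. `f i` is the part `λ_i`. -/
structure Partition' where
  f : ℕ → ℕ
  f_zero : f 0 = 0
  antitone : ∀ ⦃i j : ℕ⦄, 1 ≤ i → i ≤ j → f j ≤ f i
  ev_zero : ∃ N, ∀ i, N ≤ i → f i = 0

namespace Partition'

/-- The number of nonzero parts `ℓ(λ)`. -/
noncomputable def len (p : Partition') : ℕ := sSup {i | p.f i ≠ 0}

/-- The size `|λ| = Σ_i λ_i`. -/
noncomputable def size (p : Partition') : ℕ := ∑ᶠ i, p.f i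

/-- The transpose (conjugate): `g† j = #{i ≥ 1 : g i ≥ j}`. -/
noncomputable def conjFun (g : ℕ → ℕ) (j : ℕ) : ℕ := Set.ncard {i | 1 ≤ i ∧ j ≤ g i}

/-- Containment of partitions: `ν ⊆ μ`. -/
def Sub (ν μ : Partition') : Prop := ∀ i, ν.f i ≤ μ.f i

/-- The cells (boxes) of the skew diagram `μ/ν`: pairs `(i,j)` with `i ≥ 1` and
`ν_i < j ≤ μ_i`. -/
def cells (μ ν : Partition') : Set (ℕ × ℕ) :=
  {c | 1 ≤ c.1 ∧ ν.f c.1 < c.2 ∧ c.2 ≤ μ.f c.1}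

/-- Two boxes share an edge. -/
def Adj (a b : ℕ × ℕ) : Prop :=
  (a.1 = b.1 ∧ (a.2 + 1 = b.2 ∨ b.2 + 1 = a.2)) ∨
  (a.2 = b.2 ∧ (a.1 + 1 = b.1 ∨ b.1 + 1 = a.1))

/-- A set of boxes is connected if any two of its boxes are joined by a chain of its
boxes, each sharing an edge with the next. -/
def IsConnected (s : Set (ℕ × ℕ)) : Prop :=
  ∀ a ∈ s, ∀ b ∈ s, Relation.ReflTransGen (fun x y => x ∈ s ∧ y ∈ s ∧ Adj x y) a b

/-- `μ/ν` is a border strip: `ν ⊆ μ`, and the skew diagram is nonempty, connected,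
and contains no 2×2 square. -/
def IsBorderStrip (μ ν : Partition') : Prop :=
  Sub ν μ ∧ (cells μ ν).Nonempty ∧ IsConnected (cells μ ν) ∧
    ¬ ∃ i j : ℕ, (i, j) ∈ cells μ ν ∧ (i + 1, j) ∈ cells μ ν ∧
      (i, j + 1) ∈ cells μ ν ∧ (i + 1, j + 1) ∈ cells μ ν

/-- The number of boxes of `μ/ν`. -/
noncomputable def stripSize (μ ν : Partition') : ℕ := (cells μ ν).ncard

/-- The number of rows that `μ/ν` occupies. -/
noncomputable def rows (μ ν : Partition') : ℕ := (Prod.fst '' cells μ ν).ncard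

/-- The number of columns that `μ/ν` occupies. -/
noncomputable def cols (μ ν : Partition') : ℕ := (Prod.snd '' cells μ ν).ncard

/-- The graph of the symplectic modification rule: `ModRule n μ i τ` holds iff
`i_{2n}(μ) = i < ∞` and `τ_{2n}(μ) = τ`. -/
inductive ModRule (n : ℕ) : Partition' → ℕ → Partition' → Prop
  | base (μ : Partition') (h : μ.len ≤ n) : ModRule n μ 0 μ
  | step (μ ν τ : Partition') (i : ℕ)
      (hlen : n < μ.len)
      (hbs : IsBorderStrip μ ν)
      (hsize : stripSize μ ν = 2 * (μ.len - n - 1))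
      (hbox : (μ.len, 1) ∈ cells μ ν)
      (hrec : ModRule n ν i τ) :
      ModRule n μ (cols μ ν + i) τ

/-- `i_{2n}(μ) ∈ ℕ∞`; it is `⊤ = ∞` exactly when the modification rule fails. -/
noncomputable def i2 (n : ℕ) (μ : Partition') : ℕ∞ :=
  sInf {c | ∃ i τ, ModRule n μ i τ ∧ c = (i : ℕ∞)}

-- `τ_{2n}(μ)`, defined (arbitrarily, as `μ` itself) when `i_{2n}(μ) = ∞`.
open Classical in
noncomputable def tau (n : ℕ) (μ : Partition') : Partition' :=
  if h : ∃ it : ℕ × Partition', ModRule n μ it.1 it.2 then h.choose.2 else μ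

end Partition'

namespace Partition'

/-- The sequence `s(μ)` associated with a partition `μ`: `s_p = (n+k+1-p) - μ†_{k+1-p}`
for `1 ≤ p ≤ k`, and `s_{k+j} = (n+1-j) + τ_{2n}(μ)_j` for `1 ≤ j ≤ n`;
`s_p = 0` outside `[1, n+k]`. -/
noncomputable def seqOf (n k : ℕ) (μ : Partition') : ℕ → ℤ := fun p =>
  if p = 0 then 0
  else if p ≤ k then ((n : ℤ) + k + 1 - p) - conjFun μ.f (k + 1 - p)
  else if p ≤ n + k then ((n : ℤ) + 1 - ((p : ℤ) - k)) + (tau n μ).f (p - k)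
  else 0

end Partition'

/-!
Put `X(μ) = {μ†_j - j - n : j ≥ 1}`. The beta-numbers `μ_i - i` and the numbers `-1 - n - x`,
`x ∈ X(μ)`, partition `ℤ`. Through this complementarity, removing the border strip of size
`2(ℓ(μ) - n - 1)` that ends in `(ℓ(μ), 1)` replaces the maximum `ℓ(μ) - 1 - n` of `X(μ)` by its
negative, and such a strip exists iff that negative is not already in `X(μ)`. Hence
`i_{2n}(μ) < ∞` iff `X(μ)` contains no pair `x, -x`, and then `X(τ_{2n}(μ)) = -|X(μ)|`.

If `μ_1 ≤ k`, then `X(μ)` consists of `x_j = -s(μ)_{k+1-j}` for `j ≤ k` and of all `-n - j`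
with `j > k`. Applying complementarity to `τ = τ_{2n}(μ)` shows that the last `n` entries of
`s(μ)` are exactly the `t ∈ [1, n+k]` that are not among the `|x_j|`, which gives the permutation
property. Conversely a sequence `s` in the target is determined by its first `k` entries (the
rest being the decreasing enumeration of the complement), and these entries prescribe `μ†`.
-/

open Set

section StrictAntiOn

variable {α : Type*} [LinearOrder α] {s : Set ℕ} {f g : ℕ → α}

theorem StrictAntiOn.le_of_image_subset (hf : StrictAntiOn f s) (hg : StrictAntiOn g s)
    (h : f '' s ⊆ g '' s) {i : ℕ} (hi : i ∈ s) (heq : ∀ m ∈ s, m < i → f m = g m) :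
    f i ≤ g i := by
  obtain ⟨m, hm, hmi⟩ := h ⟨i, hi, rfl⟩
  rcases lt_trichotomy m i with hmi' | rfl | hmi'
  · exact absurd (hf.injOn hm hi ((heq m hm hmi').trans hmi)) hmi'.ne
  · exact hmi.ge
  · exact hmi ▸ (hg hi hm hmi').le

theorem StrictAntiOn.eqOn_of_image_eq (hf : StrictAntiOn f s) (hg : StrictAntiOn g s)
    (h : f '' s = g '' s) : EqOn f g s := by
  intro i
  induction i using Nat.strong_induction_on with
  | _ i ih =>
    intro hi
    have heq : ∀ m ∈ s, m < i → f m = g m := fun m hm hmi => ih m hmi hm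
    exact le_antisymm (hf.le_of_image_subset hg h.subset hi heq)
      (hg.le_of_image_subset hf h.symm.subset hi fun m hm hmi => (heq m hm hmi).symm)

end StrictAntiOn

theorem StrictAntiOn.add_sub_le {s : ℕ → ℤ} {a b : ℕ} (hs : StrictAntiOn s (Icc a b))
    {p q : ℕ} (hap : a ≤ p) (hpq : p ≤ q) (hqb : q ≤ b) : s q + q - p ≤ s p := by
  induction q, hpq using Nat.le_induction with
  | base => simp
  | succ q hpq ih =>
    have := hs ⟨by omega, by omega⟩ ⟨by omega, hqb⟩ (Nat.lt_succ_self q)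
    have := ih (by omega)
    push_cast
    omega

/-- In particular `0 ∉ X`. -/
def AntipodeFree (X : Set ℤ) : Prop := ∀ x ∈ X, 0 ≤ x → -x ∉ X

theorem antipodeFree_of_forall_neg {X : Set ℤ} (h : ∀ x ∈ X, x < 0) : AntipodeFree X :=
  fun x hx hx0 => absurd (h x hx) (not_lt.2 hx0)

theorem image_neg_abs_of_forall_neg {X : Set ℤ} (h : ∀ x ∈ X, x < 0) :
    (fun x => -|x|) '' X = X := by
  conv_rhs => rw [← image_id X]
  exact image_congr fun x hx => by simp [abs_of_neg (h x hx)]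

section Reflect

variable {X : Set ℤ} {x : ℤ}

theorem antipodeFree_insert_neg_diff_iff (hx : x ∈ X) (hnx : -x ∉ X) :
    AntipodeFree (insert (-x) (X \ {x})) ↔ AntipodeFree X := by
  have hx0 : x ≠ 0 := by rintro rfl; exact hnx (by simpa using hx)
  simp only [AntipodeFree, mem_insert_iff, mem_sdiff, mem_singleton_iff]
  constructor
  · intro h y hy hy0 hny
    have hyx : y ≠ x := by rintro rfl; exact hnx hny
    exact h y (.inr ⟨hy, hyx⟩) hy0 (.inr ⟨hny, fun h' => hnx (by rwa [← h', neg_neg])⟩)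
  · rintro h y (rfl | ⟨hy, hyx⟩) hy0 (hny | ⟨hny, hne⟩)
    · exact hx0 (by omega)
    · exact hne (neg_neg x)
    · exact hyx (by omega)
    · exact h y hy hy0 hny

theorem image_neg_abs_insert_neg_diff (hx : x ∈ X) :
    (fun y => -|y|) '' insert (-x) (X \ {x}) = (fun y => -|y|) '' X := by
  rw [image_insert_eq, abs_neg]
  ext z
  simp only [mem_insert_iff, mem_image, mem_sdiff, mem_singleton_iff]
  constructor
  · rintro (rfl | ⟨y, ⟨hy, -⟩, rfl⟩)
    exacts [⟨x, hx, rfl⟩, ⟨y, hy, rfl⟩]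
  · rintro ⟨y, hy, rfl⟩
    by_cases hyx : y = x
    · exact .inl (by rw [hyx])
    · exact .inr ⟨y, ⟨hy, hyx⟩, rfl⟩

end Reflect

namespace Partition'

/-! ### Partitions and their conjugates -/

theorem ext {p q : Partition'} (h : p.f = q.f) : p = q := by
  cases p; cases q; simp_all

theorem antitoneOn (p : Partition') : AntitoneOn p.f (Ici 1) :=
  fun _ hi _ _ hij => p.antitone hi hij

theorem bddAbove_support (p : Partition') : BddAbove {i | p.f i ≠ 0} := by
  obtain ⟨N, hN⟩ := p.ev_zero
  exact ⟨N, fun i hi => by by_contra h; exact hi (hN i (le_of_not_ge h))⟩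

theorem f_eq_zero_of_len_lt (p : Partition') {i : ℕ} (h : p.len < i) : p.f i = 0 := by
  by_contra hne
  exact (le_csSup p.bddAbove_support hne).not_gt h

theorem f_pos_of_le_len (p : Partition') {i : ℕ} (h1 : 1 ≤ i) (h2 : i ≤ p.len) :
    0 < p.f i := by
  have hne : {i | p.f i ≠ 0}.Nonempty := by
    by_contra hemp
    have : p.len = 0 := by rw [len, not_nonempty_iff_eq_empty.1 hemp, csSup_empty]; rfl
    omega
  have hlen : p.f p.len ≠ 0 := Nat.sSup_mem hne p.bddAbove_support
  have := p.antitone h1 h2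
  omega

theorem len_le_iff (p : Partition') (L : ℕ) : p.len ≤ L ↔ p.f (L + 1) = 0 := by
  refine ⟨fun h => p.f_eq_zero_of_len_lt (by omega), fun h => ?_⟩
  by_contra hlt
  have := p.f_pos_of_le_len (i := L + 1) (by omega) (by omega)
  omega

section Conjugate

variable {g : ℕ → ℕ}

theorem setOf_le_eq_Icc_conjFun (hg : AntitoneOn g (Ici 1)) (hz : ∃ N, ∀ i, N ≤ i → g i = 0)
    {j : ℕ} (hj : 1 ≤ j) : {i | 1 ≤ i ∧ j ≤ g i} = Icc 1 (conjFun g j) := by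
  have hbdd : BddAbove {i | 1 ≤ i ∧ j ≤ g i} := by
    obtain ⟨N, hN⟩ := hz
    refine ⟨N, fun i hi => ?_⟩
    by_contra h
    have := hN i (by omega)
    have := hi.2
    omega
  suffices h : ∃ m, {i | 1 ≤ i ∧ j ≤ g i} = Icc 1 m by
    obtain ⟨m, hm⟩ := h
    rw [conjFun, hm, ncard_Icc_nat, Nat.add_sub_cancel]
  rcases eq_empty_or_nonempty {i | 1 ≤ i ∧ j ≤ g i} with hemp | hne
  · exact ⟨0, by rw [hemp, Icc_eq_empty (by omega)]⟩
  · refine ⟨_, Subset.antisymm (fun i hi => ⟨hi.1, le_csSup hbdd hi⟩) ?_⟩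
    rintro i ⟨hi1, hi2⟩
    have hmem := Nat.sSup_mem hne hbdd
    exact ⟨hi1, hmem.2.trans (hg hi1 hmem.1 hi2)⟩

theorem le_conjFun_iff (hg : AntitoneOn g (Ici 1)) (hz : ∃ N, ∀ i, N ≤ i → g i = 0)
    {i j : ℕ} (hi : 1 ≤ i) (hj : 1 ≤ j) : i ≤ conjFun g j ↔ j ≤ g i := by
  have := congrArg (i ∈ ·) (setOf_le_eq_Icc_conjFun hg hz hj)
  simp only [mem_ofPred_eq, mem_Icc, eq_iff_iff] at this
  tauto

theorem conjFun_eq_zero_of_lt (hg : AntitoneOn g (Ici 1)) {j : ℕ} (hj : g 1 < j) :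
    conjFun g j = 0 := by
  have : {i | 1 ≤ i ∧ j ≤ g i} = ∅ :=
    eq_empty_of_forall_notMem fun i ⟨hi, hji⟩ => by
      have := hg (mem_Ici.2 le_rfl) hi hi
      omega
  rw [conjFun, this, ncard_empty]

theorem conjFun_antitoneOn (hg : AntitoneOn g (Ici 1)) (hz : ∃ N, ∀ i, N ≤ i → g i = 0) :
    AntitoneOn (conjFun g) (Ici 1) := by
  intro j hj j' _ hjj'
  rcases Nat.eq_zero_or_pos (conjFun g j') with h | h
  · omega
  · have := (le_conjFun_iff hg hz h (le_trans hj hjj')).1 le_rfl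
    exact (le_conjFun_iff hg hz h hj).2 (by omega)

theorem conjFun_conjFun (hg : AntitoneOn g (Ici 1)) (hz : ∃ N, ∀ i, N ≤ i → g i = 0)
    {i : ℕ} (hi : 1 ≤ i) : conjFun (conjFun g) i = g i := by
  have : {j | 1 ≤ j ∧ i ≤ conjFun g j} = Icc 1 (g i) := by
    ext j
    simp only [mem_ofPred_eq, mem_Icc]
    exact and_congr_right fun hj => le_conjFun_iff hg hz hi hj
  rw [conjFun, this, ncard_Icc_nat, Nat.add_sub_cancel]

theorem conjFun_congr {g' : ℕ → ℕ} (h : ∀ i, 1 ≤ i → g i = g' i) : conjFun g = conjFun g' := by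
  funext j
  unfold conjFun
  congr 1
  ext i
  simp only [mem_ofPred_eq]
  exact and_congr_right fun hi => by rw [h i hi]

theorem conjFun_one_le {k : ℕ} (hz : ∀ i, k < i → g i = 0) : conjFun g 1 ≤ k := by
  calc conjFun g 1 ≤ (Icc 1 k).ncard :=
        ncard_le_ncard (fun i ⟨h1, h2⟩ => ⟨h1, by by_contra h; have := hz i (by omega); omega⟩)
          (finite_Icc 1 k)
    _ = k := by rw [ncard_Icc_nat, Nat.add_sub_cancel]

end Conjugate

theorem le_conjFun_f_iff (p : Partition') {i j : ℕ} (hi : 1 ≤ i) (hj : 1 ≤ j) :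
    i ≤ conjFun p.f j ↔ j ≤ p.f i :=
  le_conjFun_iff p.antitoneOn p.ev_zero hi hj

theorem conjFun_f_eq_zero_of_lt (p : Partition') {j : ℕ} (hj : p.f 1 < j) :
    conjFun p.f j = 0 :=
  conjFun_eq_zero_of_lt p.antitoneOn hj

theorem eq_of_conjFun_eq {p q : Partition'} (h : ∀ j, 1 ≤ j → conjFun p.f j = conjFun q.f j) :
    p = q := by
  refine ext (funext fun i => ?_)
  rcases Nat.eq_zero_or_pos i with rfl | hi
  · rw [p.f_zero, q.f_zero]
  · rw [← conjFun_conjFun p.antitoneOn p.ev_zero hi, ← conjFun_conjFun q.antitoneOn q.ev_zero hi,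
      conjFun_congr h]

theorem len_eq_conjFun_one (p : Partition') : p.len = conjFun p.f 1 := by
  have : {i | 1 ≤ i ∧ 1 ≤ p.f i} = Icc 1 p.len := by
    ext i
    simp only [mem_ofPred_eq, mem_Icc]
    refine and_congr_right fun hi => ⟨fun h => ?_, fun h => p.f_pos_of_le_len hi h⟩
    by_contra hlt
    have := p.f_eq_zero_of_len_lt (not_le.1 hlt)
    omega
  rw [conjFun, this, ncard_Icc_nat, Nat.add_sub_cancel]

noncomputable def ofConj (g : ℕ → ℕ) (hg : AntitoneOn g (Ici 1))
    (hz : ∃ N, ∀ i, N ≤ i → g i = 0) : Partition' where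
  f i := if i = 0 then 0 else conjFun g i
  f_zero := if_pos rfl
  antitone i j hi hij := by
    simp only [if_neg (show i ≠ 0 by omega), if_neg (show j ≠ 0 by omega)]
    exact conjFun_antitoneOn hg hz hi (le_trans hi hij) hij
  ev_zero := ⟨g 1 + 1, fun i hi => by
    simp only [if_neg (show i ≠ 0 by omega)]
    exact conjFun_eq_zero_of_lt hg (by omega)⟩

theorem conjFun_ofConj {g : ℕ → ℕ} (hg : AntitoneOn g (Ici 1))
    (hz : ∃ N, ∀ i, N ≤ i → g i = 0) {j : ℕ} (hj : 1 ≤ j) :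
    conjFun (ofConj g hg hz).f j = g j := by
  rw [conjFun_congr (g := (ofConj g hg hz).f) (g' := conjFun g) fun i hi => if_neg (by omega),
    conjFun_conjFun hg hz hj]

/-! ### Beta-numbers -/

def beta (p : Partition') (i : ℕ) : ℤ := (p.f i : ℤ) - i

def betaSet (p : Partition') : Set ℤ := p.beta '' Ici 1

/-- The shift by `n` turns the modification rule into a reflection in `0`
(`conjBetaSet_removeStrip`). -/
noncomputable def conjBeta (n : ℕ) (p : Partition') (j : ℕ) : ℤ := (conjFun p.f j : ℤ) - j - n

noncomputable def conjBetaSet (n : ℕ) (p : Partition') : Set ℤ := conjBeta n p '' Ici 1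

theorem beta_strictAntiOn (p : Partition') : StrictAntiOn p.beta (Ici 1) := by
  intro i hi i' _ hii'
  have := p.antitone hi hii'.le
  simp only [beta]
  omega

theorem conjBeta_strictAntiOn (n : ℕ) (p : Partition') : StrictAntiOn (conjBeta n p) (Ici 1) := by
  intro j hj j' hj' hjj'
  have := conjFun_antitoneOn p.antitoneOn p.ev_zero hj hj' hjj'.le
  simp only [conjBeta]
  omega

theorem mem_betaSet_iff (p : Partition') (z : ℤ) :
    z ∈ p.betaSet ↔ ∀ j : ℕ, 1 ≤ j → (j : ℤ) - 1 - conjFun p.f j ≠ z := by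
  constructor
  · rintro ⟨i, hi, rfl⟩ j hj
    have := p.le_conjFun_f_iff hi hj
    simp only [beta]
    by_cases hji : j ≤ p.f i <;> omega
  · intro hz
    have hex : ∃ m, p.beta (m + 1) ≤ z := by
      obtain ⟨N, hN⟩ := p.ev_zero
      refine ⟨N + (-z).toNat, ?_⟩
      simp only [beta, hN _ (by omega : N ≤ N + (-z).toNat + 1)]
      omega
    -- `m` is the number of rows `i` with `λ_i - i > z`
    obtain ⟨m, hm, habove⟩ : ∃ m, p.beta (m + 1) ≤ z ∧ ∀ i, 1 ≤ i → i ≤ m → z < p.beta i :=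
      ⟨Nat.find hex, Nat.find_spec hex, fun i hi him => by
        have := Nat.find_min hex (show i - 1 < Nat.find hex by omega)
        rwa [Nat.sub_add_cancel hi, not_le] at this⟩
    by_contra hnot
    have hlt : p.beta (m + 1) < z := lt_of_le_of_ne hm fun h => hnot ⟨m + 1, by simp, h⟩
    simp only [beta] at hlt
    obtain ⟨j, hj⟩ : ∃ j : ℕ, (j : ℤ) = z + m + 1 := ⟨(z + m + 1).toNat, by omega⟩
    have hconj : conjFun p.f j = m := by
      refine le_antisymm ?_ ?_
      · by_contra h
        have := (p.le_conjFun_f_iff (i := m + 1) (j := j) (by omega) (by omega)).1 (by omega)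
        omega
      · rcases Nat.eq_zero_or_pos m with h0 | h0
        · omega
        · have := habove m h0 le_rfl
          simp only [beta] at this
          exact (p.le_conjFun_f_iff h0 (by omega)).2 (by omega)
    exact hz j (by omega) (by rw [hconj]; omega)

theorem mem_conjBetaSet_iff (n : ℕ) (p : Partition') (x : ℤ) :
    x ∈ conjBetaSet n p ↔ -1 - n - x ∉ p.betaSet := by
  rw [mem_betaSet_iff]
  push Not
  simp only [conjBetaSet, conjBeta, mem_image, mem_Ici]
  exact exists_congr fun j => and_congr_right fun _ => by omega

theorem mem_betaSet_iff_notMem_conjBetaSet (n : ℕ) (p : Partition') (z : ℤ) :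
    z ∈ p.betaSet ↔ -1 - n - z ∉ conjBetaSet n p := by
  rw [mem_conjBetaSet_iff, not_not, show -1 - (n : ℤ) - (-1 - n - z) = z by ring]

theorem conjBeta_of_lt {n : ℕ} {p : Partition'} {j : ℕ} (hj : p.f 1 < j) :
    conjBeta n p j = -n - j := by
  rw [conjBeta, p.conjFun_f_eq_zero_of_lt hj]
  ring

theorem len_sub_one_sub_mem_conjBetaSet (n : ℕ) (p : Partition') :
    (p.len : ℤ) - 1 - n ∈ conjBetaSet n p :=
  ⟨1, mem_Ici.2 le_rfl, by rw [conjBeta, len_eq_conjFun_one]; push_cast; ring⟩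

theorem conjBetaSet_neg_of_len_le {n : ℕ} {p : Partition'} (h : p.len ≤ n) :
    ∀ x ∈ conjBetaSet n p, x < 0 := by
  rintro x ⟨j, hj, rfl⟩
  have := conjFun_antitoneOn p.antitoneOn p.ev_zero (mem_Ici.2 le_rfl) hj hj
  rw [← len_eq_conjFun_one] at this
  simp only [mem_Ici] at hj
  simp only [conjBeta]
  omega

/-! ### Removing a border strip -/

theorem Adj.symm {a b : ℕ × ℕ} (h : Adj a b) : Adj b a := by
  unfold Adj at *
  omega

theorem mem_cells {μ ν : Partition'} {i j : ℕ} :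
    (i, j) ∈ cells μ ν ↔ 1 ≤ i ∧ ν.f i < j ∧ j ≤ μ.f i :=
  Iff.rfl

abbrev StepIn (s : Set (ℕ × ℕ)) (x y : ℕ × ℕ) : Prop := x ∈ s ∧ y ∈ s ∧ Adj x y

theorem isConnected_of_forall_reflTransGen {s : Set (ℕ × ℕ)} {c : ℕ × ℕ}
    (h : ∀ a ∈ s, Relation.ReflTransGen (StepIn s) a c) : IsConnected s := by
  have hswap : Function.swap (StepIn s) = StepIn s :=
    funext₂ fun _ _ => propext ⟨fun ⟨hx, hy, hxy⟩ => ⟨hy, hx, hxy.symm⟩,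
      fun ⟨hx, hy, hxy⟩ => ⟨hy, hx, hxy.symm⟩⟩
  intro a ha b hb
  exact (h a ha).trans (hswap ▸ Relation.reflTransGen_swap.2 (h b hb))

theorem reflTransGen_of_mem_cells {μ ν : Partition'} {i j j' : ℕ} (h : (i, j) ∈ cells μ ν)
    (h1 : ν.f i < j') (h2 : j' ≤ j) :
    Relation.ReflTransGen (StepIn (cells μ ν)) (i, j) (i, j') := by
  induction j, h2 using Nat.le_induction with
  | base => rfl
  | succ j hj ih =>
    rw [mem_cells] at h
    have hj' : (i, j) ∈ cells μ ν := mem_cells.2 ⟨h.1, by omega, by omega⟩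
    exact .head ⟨mem_cells.2 h, hj', .inl ⟨rfl, .inr rfl⟩⟩ (ih hj')

theorem exists_vertical_step_of_reflTransGen {s : Set (ℕ × ℕ)} {a b : ℕ × ℕ} {i : ℕ}
    (h : Relation.ReflTransGen (StepIn s) a b) (ha : i + 1 ≤ a.1) (hb : b.1 ≤ i) :
    ∃ c, (i + 1, c) ∈ s ∧ (i, c) ∈ s := by
  induction h using Relation.ReflTransGen.head_induction_on with
  | refl => omega
  | @head x y hxy _ ih =>
    by_cases hy : i + 1 ≤ y.1
    · exact ih hy
    · obtain ⟨hxs, hys, ⟨h1, _⟩ | ⟨h2, h3⟩⟩ := hxy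
      · omega
      · obtain ⟨x1, x2⟩ := x
        obtain ⟨y1, y2⟩ := y
        simp only at h2 h3 ha hy
        obtain rfl : x1 = i + 1 := by omega
        obtain rfl : y1 = i := by omega
        exact ⟨x2, hxs, h2 ▸ hys⟩

/-- The complement in `μ` of the border strip from the end of row `r` to the box `(ℓ(μ), 1)`. -/
noncomputable def removeStrip (μ : Partition') (r : ℕ) (hr : 1 ≤ r) : Partition' where
  f i := if i < r then μ.f i else if i < μ.len then μ.f (i + 1) - 1 else 0
  f_zero := by rw [if_pos (by omega), μ.f_zero]
  antitone i j hi hij := by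
    have := μ.antitone hi hij
    have := μ.antitone (show 1 ≤ i + 1 by omega) (show i + 1 ≤ j + 1 by omega)
    have := μ.antitone hi (show i ≤ j + 1 by omega)
    split_ifs <;> omega
  ev_zero := ⟨μ.len + r, fun i hi => by rw [if_neg (by omega), if_neg (by omega)]⟩

section RemoveStrip

variable {μ : Partition'} {r : ℕ} {hr : 1 ≤ r}

theorem removeStrip_f_of_lt {i : ℕ} (h : i < r) : (μ.removeStrip r hr).f i = μ.f i :=
  if_pos h

theorem removeStrip_f_of_le_of_lt {i : ℕ} (h1 : r ≤ i) (h2 : i < μ.len) :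
    (μ.removeStrip r hr).f i = μ.f (i + 1) - 1 := by
  simp only [removeStrip, if_neg (not_lt.2 h1), if_pos h2]

theorem removeStrip_f_of_len_le (hrL : r ≤ μ.len) {i : ℕ} (h : μ.len ≤ i) :
    (μ.removeStrip r hr).f i = 0 := by
  simp only [removeStrip, if_neg (show ¬ i < r by omega), if_neg (not_lt.2 h)]

theorem mem_cells_removeStrip_iff {i j : ℕ} :
    (i, j) ∈ cells μ (μ.removeStrip r hr) ↔
      r ≤ i ∧ i ≤ μ.len ∧ (μ.removeStrip r hr).f i < j ∧ j ≤ μ.f i := by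
  rw [mem_cells]
  refine ⟨fun ⟨hi, hνj, hjμ⟩ => ⟨?_, ?_, hνj, hjμ⟩, fun ⟨h1, _, h3, h4⟩ => ⟨by omega, h3, h4⟩⟩
  · by_contra h
    rw [removeStrip_f_of_lt (not_le.1 h)] at hνj
    omega
  · by_contra h
    rw [μ.f_eq_zero_of_len_lt (not_le.1 h)] at hjμ
    omega

theorem cells_removeStrip_eq_biUnion :
    cells μ (μ.removeStrip r hr) = ↑((Finset.Icc r μ.len).biUnion
      fun i => (Finset.Ioc ((μ.removeStrip r hr).f i) (μ.f i)).image (Prod.mk i)) := by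
  ext ⟨i, j⟩
  rw [mem_cells_removeStrip_iff]
  simp only [Finset.coe_biUnion, Finset.coe_image, Finset.coe_Icc, Finset.coe_Ioc, mem_iUnion,
    mem_image, mem_Icc, mem_Ioc, Prod.mk.injEq, exists_prop]
  constructor
  · rintro ⟨h1, h2, h3, h4⟩
    exact ⟨i, ⟨h1, h2⟩, j, ⟨h3, h4⟩, rfl, rfl⟩
  · rintro ⟨_, ⟨h1, h2⟩, _, ⟨h3, h4⟩, rfl, rfl⟩
    exact ⟨h1, h2, h3, h4⟩

theorem beta_removeStrip_of_lt {i : ℕ} (h : i < r) : (μ.removeStrip r hr).beta i = μ.beta i := by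
  simp only [beta, removeStrip_f_of_lt h]

theorem beta_removeStrip_of_le_of_lt {i : ℕ} (h1 : r ≤ i) (h2 : i < μ.len) :
    (μ.removeStrip r hr).beta i = μ.beta (i + 1) := by
  have := μ.f_pos_of_le_len (show 1 ≤ i + 1 by omega) h2
  simp only [beta, removeStrip_f_of_le_of_lt h1 h2]
  push_cast [Nat.cast_sub this]
  ring

variable (hrL : r ≤ μ.len)
include hrL

theorem sub_removeStrip : Sub (μ.removeStrip r hr) μ := by
  intro i
  rcases lt_or_ge i r with h | h
  · rw [removeStrip_f_of_lt h]
  rcases lt_or_ge i μ.len with h' | h'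
  · rw [removeStrip_f_of_le_of_lt h h']
    have := μ.antitone (show 1 ≤ i by omega) (Nat.le_add_right i 1)
    omega
  · rw [removeStrip_f_of_len_le hrL h']
    omega

theorem len_removeStrip_lt : (μ.removeStrip r hr).len < μ.len := by
  have : (μ.removeStrip r hr).len ≤ μ.len - 1 :=
    (len_le_iff _ _).2 (removeStrip_f_of_len_le hrL (by omega))
  omega

theorem len_one_mem_cells_removeStrip : (μ.len, 1) ∈ cells μ (μ.removeStrip r hr) := by
  have := μ.f_pos_of_le_len (show 1 ≤ μ.len by omega) le_rfl
  exact mem_cells.2 ⟨by omega, by rw [removeStrip_f_of_len_le hrL le_rfl]; omega, this⟩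

theorem isConnected_cells_removeStrip : IsConnected (cells μ (μ.removeStrip r hr)) := by
  refine isConnected_of_forall_reflTransGen (c := (μ.len, 1)) fun ⟨i, j⟩ hc => ?_
  induction h : μ.len - i generalizing i j with
  | zero =>
    obtain ⟨_, hiL, hνj, -⟩ := mem_cells_removeStrip_iff.1 hc
    obtain rfl : i = μ.len := by omega
    rw [removeStrip_f_of_len_le hrL le_rfl] at hνj
    exact reflTransGen_of_mem_cells hc (by rw [removeStrip_f_of_len_le hrL le_rfl]; omega) hνj
  | succ d ih =>
    obtain ⟨hri, hiL, hνj, hjμ⟩ := mem_cells_removeStrip_iff.1 hc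
    have hνi := removeStrip_f_of_le_of_lt (hr := hr) hri (show i < μ.len by omega)
    have hpos := μ.f_pos_of_le_len (show 1 ≤ i + 1 by omega) (show i + 1 ≤ μ.len by omega)
    have hanti := μ.antitone (show 1 ≤ i by omega) (Nat.le_add_right i 1)
    -- the first box of row `i` lies above the last box of row `i + 1`
    have hleft : (i, μ.f (i + 1)) ∈ cells μ (μ.removeStrip r hr) :=
      mem_cells_removeStrip_iff.2 ⟨hri, hiL, by omega, hanti⟩
    have hνi1 : (μ.removeStrip r hr).f (i + 1) < μ.f (i + 1) := by
      have := (μ.removeStrip r hr).antitone (show 1 ≤ i by omega) (Nat.le_add_right i 1)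
      omega
    have hbelow : (i + 1, μ.f (i + 1)) ∈ cells μ (μ.removeStrip r hr) :=
      mem_cells.2 ⟨by omega, hνi1, le_rfl⟩
    exact (reflTransGen_of_mem_cells hc (by omega) (by omega)).trans
      (.head ⟨hleft, hbelow, .inr ⟨rfl, .inl rfl⟩⟩ (ih _ _ hbelow (by omega)))

theorem isBorderStrip_removeStrip : IsBorderStrip μ (μ.removeStrip r hr) := by
  refine ⟨sub_removeStrip hrL, ⟨_, len_one_mem_cells_removeStrip hrL⟩,
    isConnected_cells_removeStrip hrL, ?_⟩
  rintro ⟨i, j, h1, -, -, h4⟩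
  rw [mem_cells_removeStrip_iff] at h1 h4
  have := removeStrip_f_of_le_of_lt (hr := hr) h1.1 (show i < μ.len by omega)
  omega

theorem sum_sub_removeStrip {a : ℕ} (hra : r ≤ a) (haL : a ≤ μ.len) :
    ∑ i ∈ Finset.Icc a μ.len, (μ.f i - (μ.removeStrip r hr).f i) = μ.f a + (μ.len - a) := by
  induction haL using Nat.decreasingInduction with
  | self => simp [removeStrip_f_of_len_le hrL le_rfl]
  | of_succ a ha ih =>
    rw [← Finset.insert_Icc_add_one_left_eq_Icc ha.le, Finset.sum_insert (by simp),
      ih (by omega), removeStrip_f_of_le_of_lt hra ha]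
    have := μ.f_pos_of_le_len (show 1 ≤ a + 1 by omega) ha
    have := μ.antitone (show 1 ≤ a by omega) (Nat.le_add_right a 1)
    omega

theorem stripSize_removeStrip : stripSize μ (μ.removeStrip r hr) = μ.f r + (μ.len - r) := by
  rw [stripSize, cells_removeStrip_eq_biUnion, ncard_coe_finset, Finset.card_biUnion]
  · simp only [Finset.card_image_of_injective _ (Prod.mk_right_injective _), Nat.card_Ioc]
    exact sum_sub_removeStrip hrL le_rfl hrL
  · intro a _ b _ hab
    simp only [Function.onFun, Finset.disjoint_left, Finset.mem_image]
    rintro _ ⟨_, _, rfl⟩ ⟨_, _, h⟩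
    exact hab (congrArg Prod.fst h).symm

theorem beta_removeStrip_len : (μ.removeStrip r hr).beta μ.len = -μ.len := by
  simp only [beta, removeStrip_f_of_len_le hrL le_rfl]
  ring

theorem beta_removeStrip_of_len_lt {i : ℕ} (h : μ.len < i) :
    (μ.removeStrip r hr).beta i = μ.beta i := by
  simp only [beta, removeStrip_f_of_len_le hrL h.le, μ.f_eq_zero_of_len_lt h]

theorem betaSet_removeStrip :
    (μ.removeStrip r hr).betaSet = insert (-(μ.len : ℤ)) (μ.betaSet \ {μ.beta r}) := by
  have hne : ∀ i, 1 ≤ i → i ≠ r → μ.beta i ≠ μ.beta r := fun i hi hir =>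
    μ.beta_strictAntiOn.injOn.ne hi (mem_Ici.2 hr) hir
  ext z
  simp only [betaSet, mem_insert_iff, mem_sdiff, mem_image, mem_Ici, mem_singleton_iff]
  constructor
  · rintro ⟨i, hi, rfl⟩
    rcases lt_or_ge i r with h | h
    · rw [beta_removeStrip_of_lt h]
      exact .inr ⟨⟨i, hi, rfl⟩, hne i hi h.ne⟩
    rcases lt_trichotomy i μ.len with h' | rfl | h'
    · rw [beta_removeStrip_of_le_of_lt h h']
      exact .inr ⟨⟨i + 1, by omega, rfl⟩, hne _ (by omega) (by omega)⟩
    · exact .inl (beta_removeStrip_len hrL)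
    · rw [beta_removeStrip_of_len_lt hrL h']
      exact .inr ⟨⟨i, hi, rfl⟩, hne i hi (by omega)⟩
  · rintro (rfl | ⟨⟨i, hi, rfl⟩, hir⟩)
    · exact ⟨μ.len, by omega, beta_removeStrip_len hrL⟩
    rcases lt_trichotomy i r with h | rfl | h
    · exact ⟨i, hi, beta_removeStrip_of_lt h⟩
    · exact absurd rfl hir
    rcases le_or_gt i μ.len with h' | h'
    · refine ⟨i - 1, by omega, ?_⟩
      rw [beta_removeStrip_of_le_of_lt (by omega) (by omega), Nat.sub_add_cancel hi]
    · exact ⟨i, hi, beta_removeStrip_of_len_lt hrL h'⟩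

end RemoveStrip

theorem eq_removeStrip_of_isBorderStrip {μ ν : Partition'} (hbs : IsBorderStrip μ ν)
    (hbox : (μ.len, 1) ∈ cells μ ν) : ∃ r, ∃ hr : 1 ≤ r, r ≤ μ.len ∧ ν = μ.removeStrip r hr := by
  obtain ⟨hsub, -, hconn, hno22⟩ := hbs
  obtain ⟨hL, hνL, hμL⟩ := mem_cells.1 hbox
  -- `r` is the top row of the strip
  have hex : ∃ i, ν.f i < μ.f i := ⟨μ.len, by omega⟩
  obtain ⟨r, hνr, hmin⟩ : ∃ r, ν.f r < μ.f r ∧ ∀ i < r, ν.f i = μ.f i :=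
    ⟨Nat.find hex, Nat.find_spec hex,
      fun i hi => le_antisymm (hsub i) (not_lt.1 (Nat.find_min hex hi))⟩
  have hr : 1 ≤ r := by
    by_contra h
    obtain rfl : r = 0 := by omega
    rw [ν.f_zero, μ.f_zero] at hνr
    omega
  have hrL : r ≤ μ.len := by
    by_contra h
    have := μ.f_eq_zero_of_len_lt (not_le.1 h)
    omega
  have hmid : ∀ i, r ≤ i → i < μ.len → ν.f i = μ.f (i + 1) - 1 := by
    intro i hri hiL
    have htop : (r, ν.f r + 1) ∈ cells μ ν := mem_cells.2 ⟨hr, by omega, by omega⟩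
    obtain ⟨c, hc1, hc2⟩ :=
      exists_vertical_step_of_reflTransGen (hconn _ hbox _ htop) (i := i) (by simpa) hri
    rw [mem_cells] at hc1 hc2
    have hμ := μ.antitone (show 1 ≤ i by omega) (Nat.le_add_right i 1)
    have hν := ν.antitone (show 1 ≤ i by omega) (Nat.le_add_right i 1)
    by_contra hne
    refine hno22 ⟨i, ν.f i + 1, ?_, ?_, ?_, ?_⟩ <;> exact mem_cells.2 ⟨by omega, by omega, by omega⟩
  refine ⟨r, hr, hrL, ext (funext fun i => ?_)⟩
  rcases lt_or_ge i r with h | h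
  · rw [removeStrip_f_of_lt h, hmin i h]
  rcases lt_or_ge i μ.len with h' | h'
  · rw [removeStrip_f_of_le_of_lt h h', hmid i h h']
  · rw [removeStrip_f_of_len_le hrL h']
    have := hsub i
    rcases h'.eq_or_lt with rfl | h''
    · omega
    · have := μ.f_eq_zero_of_len_lt h''
      omega

/-! ### The modification rule -/

theorem mem_betaSet_iff_neg_notMem_conjBetaSet (n : ℕ) (μ : Partition') :
    (μ.len : ℤ) - 2 * n - 2 ∈ μ.betaSet ↔ -((μ.len : ℤ) - 1 - n) ∉ conjBetaSet n μ := by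
  rw [mem_betaSet_iff_notMem_conjBetaSet n]
  ring_nf

theorem conjBetaSet_removeStrip {n : ℕ} {μ : Partition'} {r : ℕ} (hr : 1 ≤ r) (hrL : r ≤ μ.len)
    (hn : n + 1 < μ.len) (hβ : μ.beta r = (μ.len : ℤ) - 2 * n - 2) :
    conjBetaSet n (μ.removeStrip r hr) =
      insert (-((μ.len : ℤ) - 1 - n)) (conjBetaSet n μ \ {(μ.len : ℤ) - 1 - n}) := by
  ext y
  have hD : -1 - n - y ∈ μ.betaSet ↔ y ∉ conjBetaSet n μ := by
    rw [mem_conjBetaSet_iff, not_not]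
  rw [mem_conjBetaSet_iff, betaSet_removeStrip hrL, hβ]
  simp only [mem_insert_iff, mem_sdiff, mem_singleton_iff, hD]
  have h1 : -1 - (n : ℤ) - y = -μ.len ↔ y = μ.len - 1 - n := by omega
  have h2 : -1 - (n : ℤ) - y = μ.len - 2 * n - 2 ↔ y = -(μ.len - 1 - n) := by omega
  rw [h1, h2]
  have : -((μ.len : ℤ) - 1 - n) ≠ μ.len - 1 - n := by omega
  grind

theorem ModRule.antipodeFree_conjBetaSet {n : ℕ} {μ τ : Partition'} {i : ℕ}
    (h : ModRule n μ i τ) :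
    AntipodeFree (conjBetaSet n μ) ∧ τ.len ≤ n ∧
      conjBetaSet n τ = (fun x => -|x|) '' conjBetaSet n μ := by
  induction h with
  | base μ h =>
    have hneg := conjBetaSet_neg_of_len_le h
    exact ⟨antipodeFree_of_forall_neg hneg, h, (image_neg_abs_of_forall_neg hneg).symm⟩
  | step μ ν τ i hlen hbs hsize hbox _ ih =>
    obtain ⟨hAF, hτ, hXτ⟩ := ih
    obtain ⟨r, hr, hrL, rfl⟩ := eq_removeStrip_of_isBorderStrip hbs hbox
    rw [stripSize_removeStrip hrL] at hsize
    have := μ.f_pos_of_le_len hr hrL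
    have hβ : μ.beta r = (μ.len : ℤ) - 2 * n - 2 := by simp only [beta]; omega
    have hnx := (mem_betaSet_iff_neg_notMem_conjBetaSet n μ).1 (hβ ▸ ⟨r, hr, rfl⟩)
    have hx := len_sub_one_sub_mem_conjBetaSet n μ
    rw [conjBetaSet_removeStrip hr hrL (by omega) hβ] at hAF hXτ
    exact ⟨(antipodeFree_insert_neg_diff_iff hx hnx).1 hAF, hτ,
      hXτ.trans (image_neg_abs_insert_neg_diff hx)⟩

theorem exists_modRule_of_antipodeFree {n : ℕ} {μ : Partition'}
    (hAF : AntipodeFree (conjBetaSet n μ)) : ∃ i τ, ModRule n μ i τ := by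
  induction hL : μ.len using Nat.strong_induction_on generalizing μ with
  | _ L ih =>
    subst hL
    by_cases hlen : μ.len ≤ n
    · exact ⟨0, μ, .base μ hlen⟩
    have hx := len_sub_one_sub_mem_conjBetaSet n μ
    have hnx := hAF _ hx (by omega)
    have hn : n + 1 < μ.len := by
      by_contra h
      obtain h0 : (μ.len : ℤ) - 1 - n = 0 := by omega
      exact hnx (by rwa [h0, neg_zero, ← h0])
    obtain ⟨r, hr : 1 ≤ r, hβ⟩ := (mem_betaSet_iff_neg_notMem_conjBetaSet n μ).2 hnx
    have hrL : r ≤ μ.len := by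
      by_contra h
      have := μ.f_eq_zero_of_len_lt (not_le.1 h)
      simp only [beta] at hβ
      omega
    have hpos := μ.f_pos_of_le_len hr hrL
    have hsize : stripSize μ (μ.removeStrip r hr) = 2 * (μ.len - n - 1) := by
      rw [stripSize_removeStrip hrL]
      simp only [beta] at hβ
      omega
    have hAF' : AntipodeFree (conjBetaSet n (μ.removeStrip r hr)) := by
      rw [conjBetaSet_removeStrip hr hrL hn hβ]
      exact (antipodeFree_insert_neg_diff_iff hx hnx).2 hAF
    obtain ⟨i, τ, hmod⟩ := ih _ (len_removeStrip_lt hrL) hAF' rfl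
    exact ⟨_, τ, .step μ _ τ i (by omega) (isBorderStrip_removeStrip hrL) hsize
      (len_one_mem_cells_removeStrip hrL) hmod⟩

theorem i2_lt_top_iff_exists_modRule (n : ℕ) (μ : Partition') :
    i2 n μ < ⊤ ↔ ∃ i τ, ModRule n μ i τ := by
  rw [i2, sInf_lt_iff]
  constructor
  · rintro ⟨_, ⟨i, τ, hmod, -⟩, -⟩
    exact ⟨i, τ, hmod⟩
  · rintro ⟨i, τ, hmod⟩
    exact ⟨i, ⟨i, τ, hmod, rfl⟩, ENat.natCast_lt_top i⟩

theorem i2_lt_top_iff_antipodeFree (n : ℕ) (μ : Partition') :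
    i2 n μ < ⊤ ↔ AntipodeFree (conjBetaSet n μ) := by
  rw [i2_lt_top_iff_exists_modRule]
  exact ⟨fun ⟨_, _, hmod⟩ => hmod.antipodeFree_conjBetaSet.1, exists_modRule_of_antipodeFree⟩

theorem exists_modRule_tau {n : ℕ} {μ : Partition'} (h : i2 n μ < ⊤) :
    ∃ i, ModRule n μ i (tau n μ) := by
  obtain ⟨i, τ, hmod⟩ := (i2_lt_top_iff_exists_modRule n μ).1 h
  have h' : ∃ it : ℕ × Partition', ModRule n μ it.1 it.2 := ⟨(i, τ), hmod⟩
  rw [tau, dif_pos h']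
  exact ⟨_, h'.choose_spec⟩

/-! ### The map `μ ↦ s(μ)` -/

def signedSeqs (n k : ℕ) : Set (ℕ → ℤ) :=
  {s : ℕ → ℤ |
    (∀ p : ℕ, p = 0 ∨ n + k < p → s p = 0) ∧
    BijOn (fun p => (s p).natAbs) (Icc 1 (n + k)) (Icc 1 (n + k)) ∧
    (∀ p q : ℕ, 1 ≤ p → p < q → q ≤ k → s q < s p) ∧
    (∀ p q : ℕ, k + 1 ≤ p → p < q → q ≤ n + k → s q < s p) ∧
    (∀ p : ℕ, k + 1 ≤ p → p ≤ n + k → 0 < s p)}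

section SeqOf

variable {n k : ℕ} {μ : Partition'}

theorem seqOf_eq_zero {p : ℕ} (h : p = 0 ∨ n + k < p) : seqOf n k μ p = 0 := by
  unfold seqOf
  rcases h with h | h
  · rw [if_pos h]
  · rw [if_neg (by omega), if_neg (by omega), if_neg (by omega)]

theorem seqOf_of_le {p : ℕ} (hp : 1 ≤ p) (hpk : p ≤ k) :
    seqOf n k μ p = -conjBeta n μ (k + 1 - p) := by
  rw [seqOf, if_neg (by omega), if_pos hpk, conjBeta, Nat.cast_sub (by omega)]
  push_cast
  ring

theorem seqOf_add {j : ℕ} (hj : 1 ≤ j) (hjn : j ≤ n) :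
    seqOf n k μ (k + j) = (n : ℤ) + 1 - j + (tau n μ).f j := by
  rw [seqOf, if_neg (by omega), if_neg (by omega), if_pos (by omega), Nat.add_sub_cancel_left]
  push_cast
  ring

theorem neg_sub_mem_conjBetaSet (h1k : μ.f 1 ≤ k) {j : ℕ} (hj : k < j) :
    -(n : ℤ) - j ∈ conjBetaSet n μ :=
  ⟨j, mem_Ici.2 (by omega), conjBeta_of_lt (by omega)⟩

theorem natAbs_conjBeta_mem_Icc (h1k : μ.f 1 ≤ k) (hAF : AntipodeFree (conjBetaSet n μ))
    {j : ℕ} (hj : 1 ≤ j) (hjk : j ≤ k) : (conjBeta n μ j).natAbs ∈ Icc 1 (n + k) := by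
  have hmem : conjBeta n μ j ∈ conjBetaSet n μ := ⟨j, hj, rfl⟩
  have hne : conjBeta n μ j ≠ 0 := fun h0 => hAF _ hmem h0.ge (by rwa [h0, neg_zero, ← h0])
  have hlow : -((n : ℤ) + k) ≤ conjBeta n μ j := by simp only [conjBeta]; omega
  have hup : conjBeta n μ j ≤ n + k := by
    by_contra h
    refine hAF _ hmem (by omega) ?_
    have := neg_sub_mem_conjBetaSet (n := n) h1k (show k < (conjBeta n μ j - n).toNat by omega)
    rw [Int.toNat_of_nonneg (by omega)] at this
    convert this using 1
    ring
  simp only [mem_Icc]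
  omega

/-- The parts `j > k` of `μ†` are zero, so `X(μ)` contains `-n - j` for all `j > k`, and so does
`X(τ)`; by complementarity, `τ_1 - 1 ≥ k` would then not be a beta-number of `τ`. -/
theorem f_one_le_of_conjBetaSet_eq {τ : Partition'} (h1k : μ.f 1 ≤ k)
    (hXτ : conjBetaSet n τ = (fun x => -|x|) '' conjBetaSet n μ) : τ.f 1 ≤ k := by
  by_contra h
  have hmem : -(n : ℤ) - τ.f 1 ∈ conjBetaSet n τ := by
    rw [hXτ]
    refine ⟨_, neg_sub_mem_conjBetaSet h1k (not_le.1 h), ?_⟩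
    simp only
    rw [abs_of_neg (by omega), neg_neg]
  refine (mem_betaSet_iff_notMem_conjBetaSet n τ (τ.beta 1)).1 ⟨1, mem_Ici.2 le_rfl, rfl⟩ ?_
  convert hmem using 1
  simp only [beta]
  ring

theorem exists_add_f_eq {τ : Partition'} (h1k : μ.f 1 ≤ k)
    (hXτ : conjBetaSet n τ = (fun x => -|x|) '' conjBetaSet n μ) (hτ : τ.len ≤ n) {t : ℤ}
    (ht : 1 ≤ t) (ht' : t ≤ n + k)
    (hne : ∀ j, 1 ≤ j → j ≤ k → ((conjBeta n μ j).natAbs : ℤ) ≠ t) :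
    ∃ j, 1 ≤ j ∧ j ≤ n ∧ (n : ℤ) + 1 - j + τ.f j = t := by
  have hβ : t - n - 1 ∈ τ.betaSet := by
    rw [mem_betaSet_iff_notMem_conjBetaSet n, show -1 - (n : ℤ) - (t - n - 1) = -t by ring, hXτ]
    rintro ⟨_, ⟨j, hj, rfl⟩, hx⟩
    simp only [Int.abs_eq_natAbs] at hx
    rcases le_or_gt j k with hjk | hjk
    · exact hne j hj hjk (by omega)
    · rw [conjBeta_of_lt (by omega)] at hx
      omega
  obtain ⟨j, hj, hβj⟩ := hβ
  have hjn : j ≤ n := by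
    by_contra h
    rw [beta, τ.f_eq_zero_of_len_lt (by omega)] at hβj
    omega
  exact ⟨j, hj, hjn, by simp only [beta] at hβj; omega⟩

theorem bijOn_natAbs_seqOf (h1k : μ.f 1 ≤ k) (hAF : AntipodeFree (conjBetaSet n μ))
    (hτ : (tau n μ).len ≤ n)
    (hXτ : conjBetaSet n (tau n μ) = (fun x => -|x|) '' conjBetaSet n μ) :
    BijOn (fun p => (seqOf n k μ p).natAbs) (Icc 1 (n + k)) (Icc 1 (n + k)) := by
  have hτ1 := f_one_le_of_conjBetaSet_eq h1k hXτ
  have hmaps : MapsTo (fun p => (seqOf n k μ p).natAbs) (Icc 1 (n + k)) (Icc 1 (n + k)) := by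
    rintro p ⟨hp, hpnk⟩
    simp only
    rcases le_or_gt p k with hpk | hkp
    · rw [seqOf_of_le hp hpk, Int.natAbs_neg]
      exact natAbs_conjBeta_mem_Icc h1k hAF (by omega) (by omega)
    · obtain ⟨j, rfl⟩ : ∃ j, p = k + j := ⟨p - k, by omega⟩
      have := (tau n μ).antitone (show 1 ≤ 1 by omega) (show 1 ≤ j by omega)
      simp only [seqOf_add (μ := μ) (show 1 ≤ j by omega) (show j ≤ n by omega), mem_Icc]
      omega
  refine ((finite_Icc 1 (n + k)).surjOn_iff_bijOn_of_mapsTo hmaps).1 fun t ⟨ht, htnk⟩ => ?_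
  by_cases hhead : ∃ j, 1 ≤ j ∧ j ≤ k ∧ ((conjBeta n μ j).natAbs : ℤ) = t
  · obtain ⟨j, hj, hjk, hjt⟩ := hhead
    refine ⟨k + 1 - j, ⟨by omega, by omega⟩, ?_⟩
    simp only [seqOf_of_le (μ := μ) (show 1 ≤ k + 1 - j by omega) (show k + 1 - j ≤ k by omega),
      Nat.sub_sub_self (show j ≤ k + 1 by omega), Int.natAbs_neg]
    omega
  · push Not at hhead
    obtain ⟨j, hj, hjn, hjt⟩ :=
      exists_add_f_eq h1k hXτ hτ (t := t) (by omega) (by omega) fun j hj hjk => hhead j hj hjk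
    refine ⟨k + j, ⟨by omega, by omega⟩, ?_⟩
    simp only [seqOf_add (μ := μ) hj hjn]
    omega

theorem seqOf_mem_signedSeqs (h1k : μ.f 1 ≤ k) (hi2 : i2 n μ < ⊤) :
    seqOf n k μ ∈ signedSeqs n k := by
  obtain ⟨_, hmod⟩ := exists_modRule_tau hi2
  obtain ⟨hAF, hτ, hXτ⟩ := hmod.antipodeFree_conjBetaSet
  refine ⟨fun p hp => seqOf_eq_zero hp, bijOn_natAbs_seqOf h1k hAF hτ hXτ, ?_, ?_, ?_⟩
  · intro p q hp hpq hqk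
    rw [seqOf_of_le hp (by omega), seqOf_of_le (by omega) hqk, neg_lt_neg_iff]
    exact conjBeta_strictAntiOn n μ (mem_Ici.2 (by omega)) (mem_Ici.2 (by omega)) (by omega)
  · intro p q hp hpq hqnk
    obtain ⟨i, rfl⟩ : ∃ i, p = k + i := ⟨p - k, by omega⟩
    obtain ⟨j, rfl⟩ : ∃ j, q = k + j := ⟨q - k, by omega⟩
    rw [seqOf_add (by omega) (by omega), seqOf_add (by omega) (by omega)]
    have := (tau n μ).antitone (show 1 ≤ i by omega) (show i ≤ j by omega)
    omega
  · intro p hp hpnk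
    obtain ⟨j, rfl⟩ : ∃ j, p = k + j := ⟨p - k, by omega⟩
    rw [seqOf_add (by omega) (by omega)]
    omega

theorem eq_of_seqOf_eq {μ' : Partition'} (h1k : μ.f 1 ≤ k) (h1k' : μ'.f 1 ≤ k)
    (h : seqOf n k μ = seqOf n k μ') : μ = μ' := by
  refine eq_of_conjFun_eq fun j hj => ?_
  rcases le_or_gt j k with hjk | hjk
  · have := congrFun h (k + 1 - j)
    rw [seqOf_of_le (by omega) (by omega), seqOf_of_le (by omega) (by omega),
      Nat.sub_sub_self (by omega), neg_inj] at this
    simpa [conjBeta] using this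
  · rw [μ.conjFun_f_eq_zero_of_lt (by omega), μ'.conjFun_f_eq_zero_of_lt (by omega)]

end SeqOf

/-! ### Inverting `μ ↦ s(μ)` -/

section SignedSeqs

variable {n k : ℕ} {s s' : ℕ → ℤ}

theorem strictAntiOn_head (hs : s ∈ signedSeqs n k) : StrictAntiOn s (Icc 1 k) :=
  fun p hp q hq hpq => hs.2.2.1 p q hp.1 hpq hq.2

theorem strictAntiOn_tail (hs : s ∈ signedSeqs n k) : StrictAntiOn s (Icc (k + 1) (n + k)) :=
  fun p hp q hq hpq => hs.2.2.2.1 p q hp.1 hpq hq.2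

theorem natAbs_mem_Icc (hs : s ∈ signedSeqs n k) {p : ℕ} (hp : 1 ≤ p) (hpnk : p ≤ n + k) :
    1 ≤ (s p).natAbs ∧ (s p).natAbs ≤ n + k :=
  hs.2.1.mapsTo ⟨hp, hpnk⟩

theorem image_tail (hs : s ∈ signedSeqs n k) :
    s '' Icc (k + 1) (n + k) =
      {t : ℤ | 0 < t ∧ t ≤ n + k ∧ ∀ p ∈ Icc 1 k, ((s p).natAbs : ℤ) ≠ t} := by
  have hbij := hs.2.1
  have hpos := hs.2.2.2.2
  ext t
  constructor
  · rintro ⟨q, ⟨hq, hqnk⟩, rfl⟩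
    have hsq := hpos q hq hqnk
    have := natAbs_mem_Icc hs (by omega) hqnk
    refine ⟨hsq, by omega, fun p ⟨hp, hpk⟩ hpq => ?_⟩
    have := hbij.injOn (⟨hp, by omega⟩ : p ∈ Icc 1 (n + k)) (⟨by omega, hqnk⟩ : q ∈ Icc 1 (n + k))
      (show (s p).natAbs = (s q).natAbs by omega)
    omega
  · rintro ⟨ht, htnk, hhead⟩
    obtain ⟨q, ⟨hq, hqnk⟩, hqt⟩ := hbij.surjOn (⟨by omega, by omega⟩ : t.toNat ∈ Icc 1 (n + k))
    simp only at hqt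
    have hkq : k < q := by
      by_contra h
      exact hhead q ⟨hq, by omega⟩ (by omega)
    exact ⟨q, ⟨hkq, hqnk⟩, by have := hpos q hkq hqnk; omega⟩

theorem eq_of_eqOn_head (hs : s ∈ signedSeqs n k) (hs' : s' ∈ signedSeqs n k)
    (h : EqOn s s' (Icc 1 k)) : s = s' := by
  have htail : EqOn s s' (Icc (k + 1) (n + k)) := by
    refine (strictAntiOn_tail hs).eqOn_of_image_eq (strictAntiOn_tail hs') ?_
    rw [image_tail hs, image_tail hs']
    ext t
    simp only [mem_ofPred_eq]
    exact and_congr_right fun _ => and_congr_right fun _ =>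
      forall₂_congr fun p hp => by rw [h hp]
  funext p
  by_cases hp : p = 0 ∨ n + k < p
  · rw [hs.1 p hp, hs'.1 p hp]
  · rcases le_or_gt p k with hpk | hkp
    · exact h ⟨by omega, hpk⟩
    · exact htail ⟨hkp, by omega⟩

/-- The conjugate of the partition with `seqOf n k μ = s`, read off from `s_1, …, s_k`. -/
def headConj (n k : ℕ) (s : ℕ → ℤ) (j : ℕ) : ℕ :=
  if 1 ≤ j ∧ j ≤ k then ((n : ℤ) + j - s (k + 1 - j)).toNat else 0

theorem headConj_eq (hs : s ∈ signedSeqs n k) {j : ℕ} (hj : 1 ≤ j) (hjk : j ≤ k) :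
    (headConj n k s j : ℤ) = n + j - s (k + 1 - j) := by
  have := (strictAntiOn_head hs).add_sub_le le_rfl (show 1 ≤ k + 1 - j by omega) (by omega)
  have := natAbs_mem_Icc hs le_rfl (show 1 ≤ n + k by omega)
  rw [headConj, if_pos ⟨hj, hjk⟩]
  omega

theorem headConj_antitoneOn (hs : s ∈ signedSeqs n k) : AntitoneOn (headConj n k s) (Ici 1) := by
  intro i (hi : 1 ≤ i) i' _ hii'
  rcases le_or_gt i' k with hi'k | hki'
  · have := headConj_eq hs hi (by omega)
    have := headConj_eq hs (le_trans hi hii') hi'k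
    have := (strictAntiOn_head hs).add_sub_le (show 1 ≤ k + 1 - i' by omega)
      (show k + 1 - i' ≤ k + 1 - i by omega) (by omega)
    omega
  · rw [headConj, if_neg (by omega)]
    omega

theorem headConj_eventually_zero : ∃ N, ∀ j, N ≤ j → headConj n k s j = 0 :=
  ⟨k + 1, fun _ hj => if_neg (by omega)⟩

noncomputable def ofSignedSeq (hs : s ∈ signedSeqs n k) : Partition' :=
  ofConj (headConj n k s) (headConj_antitoneOn hs) headConj_eventually_zero

variable (hs : s ∈ signedSeqs n k)
include hs

theorem ofSignedSeq_f_one_le : (ofSignedSeq hs).f 1 ≤ k := by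
  show (if 1 = 0 then 0 else conjFun (headConj n k s) 1) ≤ k
  rw [if_neg one_ne_zero]
  exact conjFun_one_le fun j hj => if_neg (by omega)

theorem conjBeta_ofSignedSeq {j : ℕ} (hj : 1 ≤ j) (hjk : j ≤ k) :
    conjBeta n (ofSignedSeq hs) j = -s (k + 1 - j) := by
  rw [conjBeta, ofSignedSeq, conjFun_ofConj _ _ hj, headConj_eq hs hj hjk]
  ring

theorem antipodeFree_ofSignedSeq : AntipodeFree (conjBetaSet n (ofSignedSeq hs)) := by
  have h1k := ofSignedSeq_f_one_le hs
  have hcases : ∀ y ∈ conjBetaSet n (ofSignedSeq hs),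
      (∃ p, 1 ≤ p ∧ p ≤ k ∧ y = -s p) ∨ y < -(n + k : ℤ) := by
    rintro _ ⟨j, hj : 1 ≤ j, rfl⟩
    rcases le_or_gt j k with hjk | hkj
    · exact .inl ⟨k + 1 - j, by omega, by omega, conjBeta_ofSignedSeq hs hj hjk⟩
    · rw [conjBeta_of_lt (by omega)]
      exact .inr (by omega)
  intro x hx hx0 hnx
  obtain ⟨p, hp, hpk, rfl⟩ := (hcases x hx).resolve_right (by omega)
  have hsp := natAbs_mem_Icc hs hp (by omega)
  rcases hcases _ hnx with ⟨q, hq, hqk, hpq⟩ | h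
  · have := hs.2.1.injOn (⟨hp, by omega⟩ : p ∈ Icc 1 (n + k)) (⟨hq, by omega⟩ : q ∈ Icc 1 (n + k))
      (show (s p).natAbs = (s q).natAbs by omega)
    subst this
    omega
  · omega

theorem seqOf_ofSignedSeq_eqOn : EqOn (seqOf n k (ofSignedSeq hs)) s (Icc 1 k) := by
  rintro p ⟨hp, hpk⟩
  rw [seqOf_of_le hp hpk, conjBeta_ofSignedSeq hs (by omega) (by omega),
    Nat.sub_sub_self (by omega), neg_neg]

end SignedSeqs

end Partition'

open Partition' in
/-- `μ ↦ s(μ)` is a bijection from the set of partitions `μ` with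
`μ₁ ≤ k` and `i_{2n}(μ) < ∞` onto the set of integer sequences supported on `[1, n+k]`
whose absolute values are a permutation of `1, …, n+k` and which decrease strictly on the
first `k` entries and on the last `n` entries, the latter being positive. -/
theorem statement6 (n k : ℕ) :
    Set.BijOn (seqOf n k)
      {μ : Partition' | μ.f 1 ≤ k ∧ i2 n μ < ⊤}
      {s : ℕ → ℤ |
        (∀ p : ℕ, p = 0 ∨ n + k < p → s p = 0) ∧
        Set.BijOn (fun p => (s p).natAbs) (Set.Icc 1 (n + k)) (Set.Icc 1 (n + k)) ∧
        (∀ p q : ℕ, 1 ≤ p → p < q → q ≤ k → s q < s p) ∧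
        (∀ p q : ℕ, k + 1 ≤ p → p < q → q ≤ n + k → s q < s p) ∧
        (∀ p : ℕ, k + 1 ≤ p → p ≤ n + k → 0 < s p)} := by
  refine ⟨fun μ ⟨h1k, hi2⟩ => seqOf_mem_signedSeqs h1k hi2,
    fun μ ⟨h1k, _⟩ μ' ⟨h1k', _⟩ h => eq_of_seqOf_eq h1k h1k' h, fun s hs => ?_⟩
  have h1k := ofSignedSeq_f_one_le hs
  have hi2 := (i2_lt_top_iff_antipodeFree n _).2 (antipodeFree_ofSignedSeq hs)
  exact ⟨ofSignedSeq hs, ⟨h1k, hi2⟩,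
    eq_of_eqOn_head (seqOf_mem_signedSeqs h1k hi2) hs (seqOf_ofSignedSeq_eqOn hs)⟩
end

section
/- For every partition λ, one has i₁(λ) < ∞ if and only if λ is self-conjugate, i.e., λ = λ†. -/
/-- A partition: a weakly decreasing sequence of nonnegative integers, indexed starting at 1
(`f 0 = 0` by convention), with finitely many nonzero terms. `f i` is the part `λ_i`. -/
structure SeqPartition where
  f : ℕ → ℕ
  f_zero : f 0 = 0
  antitone : ∀ ⦃i j : ℕ⦄, 1 ≤ i → i ≤ j → f j ≤ f i
  ev_zero : ∃ N, ∀ i, N ≤ i → f i = 0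

namespace SeqPartition

/-- The number of nonzero parts `ℓ(λ)`. -/
noncomputable def len (p : SeqPartition) : ℕ := sSup {i | p.f i ≠ 0}

/-- The size `|λ| = Σ_i λ_i`. -/
noncomputable def size (p : SeqPartition) : ℕ := ∑ᶠ i, p.f i

/-- The transpose (conjugate): `g† j = #{i ≥ 1 : g i ≥ j}`. -/
noncomputable def conjFun (g : ℕ → ℕ) (j : ℕ) : ℕ := Set.ncard {i | 1 ≤ i ∧ j ≤ g i}

/-- Containment of partitions: `ν ⊆ μ`. -/
def Sub (ν μ : SeqPartition) : Prop := ∀ i, ν.f i ≤ μ.f i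

/-- The cells (boxes) of the skew diagram `μ/ν`: pairs `(i,j)` with `i ≥ 1` and
`ν_i < j ≤ μ_i`. -/
def cells (μ ν : SeqPartition) : Set (ℕ × ℕ) :=
  {c | 1 ≤ c.1 ∧ ν.f c.1 < c.2 ∧ c.2 ≤ μ.f c.1}

/-- Two boxes share an edge. -/
def Adj (a b : ℕ × ℕ) : Prop :=
  (a.1 = b.1 ∧ (a.2 + 1 = b.2 ∨ b.2 + 1 = a.2)) ∨
  (a.2 = b.2 ∧ (a.1 + 1 = b.1 ∨ b.1 + 1 = a.1))

/-- A set of boxes is connected if any two of its boxes are joined by a chain of its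
boxes, each sharing an edge with the next. -/
def IsConnected (s : Set (ℕ × ℕ)) : Prop :=
  ∀ a ∈ s, ∀ b ∈ s, Relation.ReflTransGen (fun x y => x ∈ s ∧ y ∈ s ∧ Adj x y) a b

/-- `μ/ν` is a border strip: `ν ⊆ μ`, and the skew diagram is nonempty, connected,
and contains no 2×2 square. -/
def IsBorderStrip (μ ν : SeqPartition) : Prop :=
  Sub ν μ ∧ (cells μ ν).Nonempty ∧ IsConnected (cells μ ν) ∧
    ¬ ∃ i j : ℕ, (i, j) ∈ cells μ ν ∧ (i + 1, j) ∈ cells μ ν ∧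
      (i, j + 1) ∈ cells μ ν ∧ (i + 1, j + 1) ∈ cells μ ν

/-- The number of boxes of `μ/ν`. -/
noncomputable def stripSize (μ ν : SeqPartition) : ℕ := (cells μ ν).ncard

/-- The number of rows that `μ/ν` occupies. -/
noncomputable def rows (μ ν : SeqPartition) : ℕ := (Prod.fst '' cells μ ν).ncard

/-- The number of columns that `μ/ν` occupies. -/
noncomputable def cols (μ ν : SeqPartition) : ℕ := (Prod.snd '' cells μ ν).ncard

/-- The graph of the symplectic modification rule: `ModRule n μ i τ` holds iff
`i_{2n}(μ) = i < ∞` and `τ_{2n}(μ) = τ`. -/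
inductive ModRule (n : ℕ) : SeqPartition → ℕ → SeqPartition → Prop
  | base (μ : SeqPartition) (h : μ.len ≤ n) : ModRule n μ 0 μ
  | step (μ ν τ : SeqPartition) (i : ℕ)
      (hlen : n < μ.len)
      (hbs : IsBorderStrip μ ν)
      (hsize : stripSize μ ν = 2 * (μ.len - n - 1))
      (hbox : (μ.len, 1) ∈ cells μ ν)
      (hrec : ModRule n ν i τ) :
      ModRule n μ (cols μ ν + i) τ

/-- `i_{2n}(μ) ∈ ℕ∞`; it is `⊤ = ∞` exactly when the modification rule fails. -/
noncomputable def i2 (n : ℕ) (μ : SeqPartition) : ℕ∞ :=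
  sInf {c | ∃ i τ, ModRule n μ i τ ∧ c = (i : ℕ∞)}

-- `τ_{2n}(μ)`, defined (arbitrarily, as `μ` itself) when `i_{2n}(μ) = ∞`.
open Classical in
noncomputable def tau (n : ℕ) (μ : SeqPartition) : SeqPartition :=
  if h : ∃ it : ℕ × SeqPartition, ModRule n μ it.1 it.2 then h.choose.2 else μ

end SeqPartition

namespace SeqPartition

/-- The graph of the odd orthogonal (`O(1)`) modification rule: `ModRuleO μ i` holds iff
`i₁(μ) = i < ∞`.  Here one removes border strips of size `2ℓ(μ) - 1` containing the box
`(ℓ(μ), 1)`, and each removed strip with `c` columns contributes `c - 1`. -/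
inductive ModRuleO : SeqPartition → ℕ → Prop
  | base (μ : SeqPartition) (h : μ.len = 0) : ModRuleO μ 0
  | step (μ ν : SeqPartition) (i : ℕ)
      (hlen : 0 < μ.len)
      (hbs : IsBorderStrip μ ν)
      (hsize : stripSize μ ν = 2 * μ.len - 1)
      (hbox : (μ.len, 1) ∈ cells μ ν)
      (hrec : ModRuleO ν i) :
      ModRuleO μ (cols μ ν - 1 + i)

/-- `i₁(μ) ∈ ℕ∞`; it is `⊤ = ∞` exactly when the `O(1)` modification rule fails. -/
noncomputable def i1 (μ : SeqPartition) : ℕ∞ :=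
  sInf {c | ∃ i, ModRuleO μ i ∧ c = (i : ℕ∞)}

end SeqPartition

/-!
If `λ = λ†` then `λ₁ = ℓ(λ)`, so the principal hook of `λ` (its first row and column) is a
border strip of size `λ₁ + ℓ(λ) - 1 = 2ℓ(λ) - 1` through `(ℓ(λ), 1)`, and removing it leaves a
self-conjugate partition: the rule runs down to `∅`. Conversely, the absence of `2 × 2` squares
forces a border strip `λ/ν` through `(ℓ(λ), 1)` with top row `r` to satisfy
`ν_k = λ_{k+1} - 1` on rows `r ≤ k < ℓ(λ)`, so it has size `λ_r + ℓ(λ) - r`. If moreover `ν` is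
self-conjugate, then `ν₁ = ℓ(ν) < ℓ(λ)` rules out `r > 1`; hence `λ₁ = ℓ(λ)`, `ν` is `λ` minus its
principal hook, and `λ` is self-conjugate.
-/
namespace SeqPartition

@[ext]
theorem ext {p q : SeqPartition} (h : p.f = q.f) : p = q := by
  cases p; cases q; cases h; rfl

lemma bddAbove_support (p : SeqPartition) : BddAbove {i | p.f i ≠ 0} := by
  obtain ⟨N, hN⟩ := p.ev_zero
  exact ⟨N, fun i hi => by by_contra h; exact hi (hN i (by omega))⟩

lemma le_len_iff (p : SeqPartition) {i : ℕ} (hi : 1 ≤ i) : i ≤ p.len ↔ p.f i ≠ 0 := by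
  refine ⟨fun h => ?_, fun h => le_csSup p.bddAbove_support h⟩
  have hne : {i | p.f i ≠ 0}.Nonempty := by
    by_contra hc
    rw [Set.not_nonempty_iff_eq_empty] at hc
    rw [len, hc, csSup_empty] at h
    exact absurd h (by simp; omega)
  have hlen : p.f p.len ≠ 0 := Nat.sSup_mem hne p.bddAbove_support
  have := p.antitone hi h
  omega

lemma f_eq_zero_of_len_lt (p : SeqPartition) {i : ℕ} (h : p.len < i) : p.f i = 0 := by
  by_contra hc
  exact absurd ((p.le_len_iff (by omega)).2 hc) (by omega)

lemma eq_of_forall_pos_le_iff {a b : ℕ} (h : ∀ i, 1 ≤ i → (i ≤ a ↔ i ≤ b)) : a = b := by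
  refine eq_of_forall_le_iff fun i => ?_
  rcases Nat.eq_zero_or_pos i with rfl | hi
  · simp
  · exact h i hi

lemma exists_setOf_le_f_eq_Icc (p : SeqPartition) {j : ℕ} (hj : 1 ≤ j) :
    ∃ m, {i | 1 ≤ i ∧ j ≤ p.f i} = Set.Icc 1 m := by
  have hex : ∃ m, p.f (m + 1) < j := by
    obtain ⟨N, hN⟩ := p.ev_zero
    exact ⟨N, by rw [hN _ (by omega)]; omega⟩
  refine ⟨Nat.find hex, Set.ext fun i => ⟨fun ⟨hi, hji⟩ => ⟨hi, ?_⟩, fun ⟨hi, him⟩ => ⟨hi, ?_⟩⟩⟩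
  · by_contra hc
    have := p.antitone (i := Nat.find hex + 1) (j := i) (by omega) (by omega)
    have := Nat.find_spec hex
    omega
  · have := Nat.find_min hex (m := i - 1) (by omega)
    rwa [Nat.sub_add_cancel hi, not_lt] at this

lemma le_conjFun_iff (p : SeqPartition) {i j : ℕ} (hi : 1 ≤ i) (hj : 1 ≤ j) :
    i ≤ conjFun p.f j ↔ j ≤ p.f i := by
  obtain ⟨m, hm⟩ := p.exists_setOf_le_f_eq_Icc hj
  have hconj : conjFun p.f j = m := by
    rw [conjFun, hm, ← Finset.coe_Icc, Set.ncard_coe_finset, Nat.card_Icc, Nat.add_sub_cancel]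
  have := Set.ext_iff.1 hm i
  simp only [Set.mem_ofPred_eq, Set.mem_Icc] at this
  rw [hconj]
  tauto

-- `λ†₀` is the `ncard` of an infinite set, hence `0`, in agreement with `λ₀ = 0`.
lemma conjFun_zero (p : SeqPartition) : conjFun p.f 0 = 0 := by
  have : {i | 1 ≤ i ∧ 0 ≤ p.f i} = Set.Ici 1 := by ext i; simp
  rw [conjFun, this]
  exact (Set.Ici_infinite 1).ncard

def IsSelfConj (p : SeqPartition) : Prop := ∀ j, p.f j = conjFun p.f j

lemma isSelfConj_iff_symm (p : SeqPartition) :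
    IsSelfConj p ↔ ∀ i j, 1 ≤ i → 1 ≤ j → (j ≤ p.f i ↔ i ≤ p.f j) := by
  refine ⟨fun h i j hi hj => ?_, fun h j => ?_⟩
  · rw [h j, p.le_conjFun_iff hi hj]
  · rcases Nat.eq_zero_or_pos j with rfl | hj
    · rw [p.f_zero, conjFun_zero]
    · exact eq_of_forall_pos_le_iff fun i hi => by rw [← h i j hi hj, p.le_conjFun_iff hi hj]

lemma f_one_eq_len_iff (p : SeqPartition) :
    p.f 1 = p.len ↔ ∀ i, 1 ≤ i → (1 ≤ p.f i ↔ i ≤ p.f 1) := by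
  refine ⟨fun h i hi => ?_, fun h => eq_of_forall_pos_le_iff fun i hi => ?_⟩
  · rw [h, p.le_len_iff hi]; omega
  · rw [← h i hi, p.le_len_iff hi]; omega

lemma IsSelfConj.f_one_eq_len {p : SeqPartition} (h : IsSelfConj p) : p.f 1 = p.len :=
  p.f_one_eq_len_iff.2 fun i hi => (p.isSelfConj_iff_symm.1 h) i 1 hi le_rfl

-- `λ` minus its principal hook, the hook of the box `(1, 1)`.
def removeFirstHook (p : SeqPartition) : SeqPartition where
  f i := if i = 0 then 0 else p.f (i + 1) - 1
  f_zero := rfl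
  antitone i j hi hij := by
    simp only [if_neg (show i ≠ 0 by omega), if_neg (show j ≠ 0 by omega)]
    exact Nat.sub_le_sub_right (p.antitone (by omega) (by omega)) 1
  ev_zero := by
    obtain ⟨N, hN⟩ := p.ev_zero
    exact ⟨N, fun i hi => by split_ifs <;> simp [hN (i + 1) (by omega)]⟩

lemma removeFirstHook_f (p : SeqPartition) {i : ℕ} (hi : 1 ≤ i) :
    (removeFirstHook p).f i = p.f (i + 1) - 1 :=
  if_neg (by omega)

lemma isSelfConj_iff_removeFirstHook (p : SeqPartition) :
    IsSelfConj p ↔ p.f 1 = p.len ∧ IsSelfConj (removeFirstHook p) := by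
  simp only [isSelfConj_iff_symm, f_one_eq_len_iff]
  constructor
  · intro h
    refine ⟨fun i hi => h i 1 hi le_rfl, fun i j hi hj => ?_⟩
    rw [removeFirstHook_f p hi, removeFirstHook_f p hj]
    have := h (i + 1) (j + 1) (by omega) (by omega)
    omega
  · rintro ⟨h1, hr⟩ i j hi hj
    rcases Nat.eq_or_lt_of_le hi with rfl | hi'
    · exact (h1 j hj).symm
    rcases Nat.eq_or_lt_of_le hj with rfl | hj'
    · exact h1 i hi
    have := hr (i - 1) (j - 1) (by omega) (by omega)
    rw [removeFirstHook_f p (by omega), removeFirstHook_f p (by omega),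
      Nat.sub_add_cancel hi, Nat.sub_add_cancel hj] at this
    omega

lemma len_removeFirstHook_lt (p : SeqPartition) (hp : 0 < p.len) :
    (removeFirstHook p).len < p.len := by
  by_contra! h
  have := ((removeFirstHook p).le_len_iff hp).1 h
  rw [removeFirstHook_f p hp, p.f_eq_zero_of_len_lt (by omega)] at this
  exact this rfl

lemma mem_cells {μ ν : SeqPartition} {i j : ℕ} :
    (i, j) ∈ cells μ ν ↔ 1 ≤ i ∧ ν.f i < j ∧ j ≤ μ.f i := Iff.rfl

lemma stripSize_eq_sum (μ ν : SeqPartition) :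
    stripSize μ ν = ∑ i ∈ Finset.Icc 1 μ.len, (μ.f i - ν.f i) := by
  have hcells : cells μ ν = ↑((Finset.Icc 1 μ.len).biUnion
      fun i => ({i} : Finset ℕ) ×ˢ Finset.Ioc (ν.f i) (μ.f i)) := by
    ext ⟨i, j⟩
    simp only [mem_cells, Finset.coe_biUnion, Finset.mem_coe, Finset.mem_Icc, Set.mem_iUnion,
      Finset.mem_product, Finset.mem_singleton, Finset.mem_Ioc, exists_prop]
    constructor
    · rintro ⟨hi, hν, hμ⟩
      exact ⟨i, ⟨hi, (μ.le_len_iff hi).2 (by omega)⟩, rfl, hν, hμ⟩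
    · rintro ⟨k, ⟨hk, -⟩, rfl, hν, hμ⟩
      exact ⟨hk, hν, hμ⟩
  rw [stripSize, hcells, Set.ncard_coe_finset, Finset.card_biUnion]
  · simp
  · intro x _ y _ hxy
    simp only [Finset.disjoint_left, Finset.mem_product, Finset.mem_singleton]
    exact fun _ ha hb => hxy (ha.1.symm.trans hb.1)

lemma sum_Icc_tsub_add_eq {f g : ℕ → ℕ} {r L : ℕ} (hrL : r ≤ L) (hle : ∀ k, g k ≤ f k)
    (hstep : ∀ k, r ≤ k → k < L → g k + 1 = f (k + 1)) :
    ∑ k ∈ Finset.Icc r L, (f k - g k) + g L = f r + (L - r) := by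
  induction L, hrL using Nat.le_induction with
  | base => simp [hle r]
  | succ L hrL ih =>
    rw [Finset.sum_Icc_succ_top (by omega)]
    have := ih fun k h1 h2 => hstep k h1 (by omega)
    have := hstep L hrL (by omega)
    have := hle (L + 1)
    omega

abbrev Joined (s : Set (ℕ × ℕ)) : ℕ × ℕ → ℕ × ℕ → Prop :=
  Relation.ReflTransGen fun x y => x ∈ s ∧ y ∈ s ∧ Adj x y

lemma Joined.symm {s : Set (ℕ × ℕ)} {a b : ℕ × ℕ} (h : Joined s a b) : Joined s b a := by
  have : Std.Symm fun x y => x ∈ s ∧ y ∈ s ∧ Adj x y :=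
    ⟨fun x y ⟨hx, hy, hxy⟩ => ⟨hy, hx, by unfold Adj at *; omega⟩⟩
  exact Relation.ReflTransGen.stdSymm.symm a b h

lemma Joined.exists_vertical_pair {s : Set (ℕ × ℕ)} {a b : ℕ × ℕ} (h : Joined s a b)
    {k : ℕ} (hak : a.1 ≤ k) (hkb : k < b.1) : ∃ j, (k, j) ∈ s ∧ (k + 1, j) ∈ s := by
  induction h with
  | refl => omega
  | @tail c d _ hcd ih =>
    obtain ⟨hc, hd, hadj⟩ := hcd
    rcases Nat.lt_or_ge k c.1 with hkc | hkc
    · exact ih hkc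
    obtain ⟨c1, c2⟩ := c
    obtain ⟨d1, d2⟩ := d
    simp only [Adj] at hadj hkc hkb
    obtain ⟨rfl, rfl⟩ : c1 = k ∧ d1 = k + 1 := by omega
    obtain rfl : d2 = c2 := by omega
    exact ⟨_, hc, hd⟩

lemma joined_cells_of_same_row {μ ν : SeqPartition} {i j j' : ℕ} (h : (i, j) ∈ cells μ ν)
    (h' : (i, j') ∈ cells μ ν) : Joined (cells μ ν) (i, j) (i, j') := by
  wlog hjj' : j ≤ j' generalizing j j'
  · exact (this h' h (by omega)).symm
  obtain ⟨d, rfl⟩ := Nat.exists_eq_add_of_le hjj'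
  induction d with
  | zero => exact .refl
  | succ d ih =>
    rw [mem_cells] at h h'
    have hmid : (i, j + d) ∈ cells μ ν := mem_cells.2 ⟨h.1, by omega, by omega⟩
    exact (ih hmid (by omega)).tail ⟨hmid, h', Or.inl ⟨rfl, Or.inl (by omega)⟩⟩

lemma f_succ_eq_of_vertical_pair {μ ν : SeqPartition} (hbs : IsBorderStrip μ ν) {k j : ℕ}
    (h : (k, j) ∈ cells μ ν) (h' : (k + 1, j) ∈ cells μ ν) : μ.f (k + 1) = ν.f k + 1 := by
  obtain ⟨-, -, -, hno⟩ := hbs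
  rw [mem_cells] at h h'
  have hμ := μ.antitone (i := k) (j := k + 1) h.1 (by omega)
  have hν := ν.antitone (i := k) (j := k + 1) h.1 (by omega)
  by_contra hne
  exact hno ⟨k, ν.f k + 1, mem_cells.2 ⟨by omega, by omega, by omega⟩,
    mem_cells.2 ⟨by omega, by omega, by omega⟩, mem_cells.2 ⟨by omega, by omega, by omega⟩,
    mem_cells.2 ⟨by omega, by omega, by omega⟩⟩

lemma mem_cells_removeFirstHook {p : SeqPartition} {i j : ℕ} :
    (i, j) ∈ cells p (removeFirstHook p) ↔ 1 ≤ i ∧ p.f (i + 1) - 1 < j ∧ j ≤ p.f i := by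
  rw [mem_cells]
  exact ⟨fun ⟨hi, h⟩ => ⟨hi, by rwa [removeFirstHook_f p hi] at h⟩,
    fun ⟨hi, h⟩ => ⟨hi, by rwa [removeFirstHook_f p hi]⟩⟩

lemma len_one_mem_cells_removeFirstHook (p : SeqPartition) (hp : 0 < p.len) :
    (p.len, 1) ∈ cells p (removeFirstHook p) := by
  rw [mem_cells_removeFirstHook, p.f_eq_zero_of_len_lt (Nat.lt_succ_self _)]
  have := (p.le_len_iff hp).1 le_rfl
  omega

lemma joined_len_one_of_mem_cells_removeFirstHook (p : SeqPartition) {c : ℕ × ℕ}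
    (hc : c ∈ cells p (removeFirstHook p)) :
    Joined (cells p (removeFirstHook p)) c (p.len, 1) := by
  obtain ⟨i, j⟩ := c
  induction hd : p.len - i generalizing i j with
  | zero =>
    have hi := (mem_cells_removeFirstHook.1 hc).1
    obtain rfl : i = p.len := le_antisymm ((p.le_len_iff hi).2 (by rw [mem_cells] at hc; omega))
      (by omega)
    exact joined_cells_of_same_row hc (p.len_one_mem_cells_removeFirstHook (by omega))
  | succ d ih =>
    rw [mem_cells_removeFirstHook] at hc
    have hnext := (p.le_len_iff (i := i + 1) (by omega)).1 (by omega)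
    have hanti := p.antitone (i := i + 1) (j := i + 1 + 1) (by omega) (by omega)
    have hcorner : (i, p.f (i + 1)) ∈ cells p (removeFirstHook p) :=
      mem_cells_removeFirstHook.2 ⟨hc.1, by omega, p.antitone hc.1 (by omega)⟩
    have hbelow : (i + 1, p.f (i + 1)) ∈ cells p (removeFirstHook p) :=
      mem_cells_removeFirstHook.2 ⟨by omega, by omega, le_rfl⟩
    exact ((joined_cells_of_same_row (mem_cells_removeFirstHook.2 hc) hcorner).tail
      ⟨hcorner, hbelow, Or.inr ⟨rfl, Or.inl rfl⟩⟩).trans (ih _ _ hbelow (by omega))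

lemma isBorderStrip_removeFirstHook (p : SeqPartition) (hp : 0 < p.len) :
    IsBorderStrip p (removeFirstHook p) := by
  refine ⟨fun i => ?_, ⟨_, p.len_one_mem_cells_removeFirstHook hp⟩, fun a ha b hb => ?_, ?_⟩
  · rcases Nat.eq_zero_or_pos i with rfl | hi
    · rw [(removeFirstHook p).f_zero]; exact Nat.zero_le _
    · rw [removeFirstHook_f p hi]
      have := p.antitone (i := i) (j := i + 1) hi (by omega)
      omega
  · exact (p.joined_len_one_of_mem_cells_removeFirstHook ha).trans
      (p.joined_len_one_of_mem_cells_removeFirstHook hb).symm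
  · rintro ⟨i, j, h, -, -, h'⟩
    rw [mem_cells_removeFirstHook] at h h'
    omega

lemma stripSize_removeFirstHook (p : SeqPartition) (hp : 0 < p.len) :
    stripSize p (removeFirstHook p) = p.f 1 + p.len - 1 := by
  have hsub := (p.isBorderStrip_removeFirstHook hp).1
  have := sum_Icc_tsub_add_eq (r := 1) hp hsub fun k hk hkL => by
    rw [removeFirstHook_f p hk]
    have := (p.le_len_iff (i := k + 1) (by omega)).1 (by omega)
    omega
  rw [removeFirstHook_f p hp, p.f_eq_zero_of_len_lt (Nat.lt_succ_self _)] at this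
  rw [stripSize_eq_sum]
  omega

section BorderStrip

variable {μ ν : SeqPartition}

lemma IsBorderStrip.f_succ_eq (hbs : IsBorderStrip μ ν) (hbox : (μ.len, 1) ∈ cells μ ν)
    {r j k : ℕ} (hr : (r, j) ∈ cells μ ν) (hrk : r ≤ k) (hkL : k < μ.len) :
    μ.f (k + 1) = ν.f k + 1 :=
  have ⟨_, hk, hk'⟩ := Joined.exists_vertical_pair (hbs.2.2.1 _ hr _ hbox) hrk hkL
  f_succ_eq_of_vertical_pair hbs hk hk'

lemma IsBorderStrip.stripSize_eq (hbs : IsBorderStrip μ ν) (hbox : (μ.len, 1) ∈ cells μ ν)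
    {r : ℕ} (hr1 : 1 ≤ r) (hr : ν.f r < μ.f r) (habove : ∀ k < r, ν.f k = μ.f k) :
    stripSize μ ν = μ.f r + (μ.len - r) := by
  have hrL : r ≤ μ.len := (μ.le_len_iff hr1).2 (by omega)
  have hνL : ν.f μ.len = 0 := by rw [mem_cells] at hbox; omega
  have hrestrict : ∑ k ∈ Finset.Icc 1 μ.len, (μ.f k - ν.f k) =
      ∑ k ∈ Finset.Icc r μ.len, (μ.f k - ν.f k) := by
    refine (Finset.sum_subset (Finset.Icc_subset_Icc_left hr1) fun k hk hkr => ?_).symm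
    simp only [Finset.mem_Icc] at hk hkr
    rw [habove k (by omega), Nat.sub_self]
  have := sum_Icc_tsub_add_eq hrL hbs.1 fun k hrk hkL =>
    (hbs.f_succ_eq hbox (mem_cells.2 ⟨hr1, Nat.lt_succ_self _, hr⟩) hrk hkL).symm
  rw [stripSize_eq_sum, hrestrict]
  omega

lemma IsBorderStrip.eq_removeFirstHook (hbs : IsBorderStrip μ ν)
    (hsize : stripSize μ ν = 2 * μ.len - 1) (hbox : (μ.len, 1) ∈ cells μ ν)
    (hν : ν.f 1 < μ.len) : μ.f 1 = μ.len ∧ ν = removeFirstHook μ := by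
  have hνL : ν.f μ.len = 0 := by rw [mem_cells] at hbox; omega
  have hex : ∃ r, ν.f r < μ.f r := ⟨μ.len, by rw [mem_cells] at hbox; omega⟩
  have hr := Nat.find_spec hex
  have habove : ∀ k < Nat.find hex, ν.f k = μ.f k :=
    fun k hk => le_antisymm (hbs.1 k) (not_lt.1 (Nat.find_min hex hk))
  have hr1 : 1 ≤ Nat.find hex := Nat.pos_of_ne_zero fun h => by
    rw [h, ν.f_zero, μ.f_zero] at hr; exact lt_irrefl 0 hr
  have hrL : Nat.find hex ≤ μ.len := (μ.le_len_iff hr1).2 (by omega)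
  have hsize' := hbs.stripSize_eq hbox hr1 hr habove
  -- The top row is the first: otherwise `ν₁ = μ₁ ≥ μ_r = ℓ(μ) + r - 1 ≥ ℓ(μ)`.
  have htop : Nat.find hex = 1 := by
    by_contra hne
    have h1 := habove 1 (by omega)
    have := μ.antitone le_rfl hr1
    omega
  rw [htop] at hsize' hr
  refine ⟨by omega, SeqPartition.ext (funext fun i => ?_)⟩
  rcases Nat.eq_zero_or_pos i with rfl | hi
  · rw [ν.f_zero, (removeFirstHook μ).f_zero]
  rw [removeFirstHook_f μ hi]
  rcases Nat.lt_or_ge i μ.len with hiL | hiL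
  · rw [hbs.f_succ_eq hbox (mem_cells.2 ⟨le_rfl, Nat.lt_succ_self _, hr⟩) hi hiL]
    rfl
  · have := ν.antitone (by omega) hiL
    rw [μ.f_eq_zero_of_len_lt (by omega)]
    omega

end BorderStrip

lemma i1_lt_top_iff (p : SeqPartition) : i1 p < ⊤ ↔ ∃ i, ModRuleO p i := by
  constructor
  · intro h
    by_contra! hnone
    have hempty : {c : ℕ∞ | ∃ i, ModRuleO p i ∧ c = i} = ∅ := by
      ext c
      simpa using fun i hi _ => hnone i hi
    rw [i1, hempty, sInf_empty] at h
    exact lt_irrefl ⊤ h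
  · rintro ⟨i, hi⟩
    calc i1 p ≤ i := sInf_le ⟨i, hi, rfl⟩
      _ < ⊤ := ENat.natCast_lt_top i

lemma isSelfConj_of_len_eq_zero {p : SeqPartition} (hp : p.len = 0) : IsSelfConj p := by
  have hzero : ∀ i, 1 ≤ i → p.f i = 0 := fun i hi => p.f_eq_zero_of_len_lt (by omega)
  refine p.isSelfConj_iff_symm.2 fun i j hi hj => ?_
  rw [hzero i hi, hzero j hj]
  omega

lemma ModRuleO.isSelfConj {p : SeqPartition} {i : ℕ} (h : ModRuleO p i) : IsSelfConj p := by
  induction h with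
  | base μ hμ => exact isSelfConj_of_len_eq_zero hμ
  | step μ ν i hlen hbs hsize hbox _ ih =>
    have hνlen : ν.len < μ.len := by
      by_contra! hle
      have := (ν.le_len_iff hlen).1 hle
      rw [mem_cells] at hbox
      omega
    obtain ⟨hμ1, rfl⟩ := hbs.eq_removeFirstHook hsize hbox (ih.f_one_eq_len ▸ hνlen)
    exact μ.isSelfConj_iff_removeFirstHook.2 ⟨hμ1, ih⟩

lemma IsSelfConj.exists_modRuleO {p : SeqPartition} (h : IsSelfConj p) : ∃ i, ModRuleO p i := by
  induction hn : p.len using Nat.strong_induction_on generalizing p with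
  | _ n ih =>
    rcases Nat.eq_zero_or_pos p.len with hp | hp
    · exact ⟨0, .base p hp⟩
    obtain ⟨hp1, hrest⟩ := p.isSelfConj_iff_removeFirstHook.1 h
    obtain ⟨i, hi⟩ := ih _ (hn ▸ p.len_removeFirstHook_lt hp) hrest rfl
    refine ⟨_, .step p _ i hp (p.isBorderStrip_removeFirstHook hp) ?_
      (p.len_one_mem_cells_removeFirstHook hp) hi⟩
    rw [stripSize_removeFirstHook p hp, hp1]
    omega

end SeqPartition

open SeqPartition in
/-- `i₁(λ) < ∞` if and only if `λ` is self-conjugate. -/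
theorem statement10 (lam : SeqPartition) :
    i1 lam < ⊤ ↔ ∀ j : ℕ, lam.f j = conjFun lam.f j := by
  rw [i1_lt_top_iff]
  exact ⟨fun ⟨_, h⟩ => h.isSelfConj, IsSelfConj.exists_modRuleO⟩
end
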